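/- arXiv:2006.11022 — 6 statements merged into one kernel-verified Lean document; each statement's English description precedes it below -/
import Mathlib

section
/- Let Σ be a symmetric positive semidefinite matrix partitioned as Σ = [[Σ_xx, Σ_xu],[Σ_ux, Σ_uu]] with Σ_xx ∈ ℝ^{d_x×d_x} positive definite, and suppose Σ_xx ⪰ (A B) Σ (A B)^⊤ + σ_w² I for some σ_w > 0, where (A B) is the horizontal concatenation of A ∈ ℝ^{d_x×d_x} and B ∈ ℝ^{d_x×d_u}. Then the controller K = Σ_ux Σ_xx^{-1} satisfies ρ(A + BK) < 1, i.e., every eigenvalue of A + BK has absolute value strictly less than 1. -/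
/-! With `K Σ_xx = Σ_ux`, the covariance `(A B) Σ (A B)ᵀ` splits as `L Σ_xx Lᵀ + B S Bᵀ` with
`L = A + B K` and `S = Σ_uu - K Σ_xx Kᵀ` the Schur complement of `Σ_xx` in `Σ`, so `S ⪰ 0`.
The hypothesis then yields the Lyapunov inequality `Σ_xx - L Σ_xx Lᵀ ⪰ σ_w² I ≻ 0`. Evaluating
it at a left eigenvector `v` of `L` with eigenvalue `μ` gives `(1 - |μ|²) v* Σ_xx v > 0`,
and `v* Σ_xx v ≥ 0` forces `|μ| < 1`. -/

open Matrix
open scoped ComplexOrder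

namespace Matrix

theorem exists_mulVec_eq_smul_of_mem_spectrum {K n : Type*} [Field K] [Fintype n] [DecidableEq n]
    {M : Matrix n n K} {μ : K} (hμ : μ ∈ spectrum K M) : ∃ v ≠ 0, M *ᵥ v = μ • v := by
  rw [← spectrum_toLin', ← Module.End.hasEigenvalue_iff_mem_spectrum] at hμ
  obtain ⟨v, hv⟩ := hμ.exists_hasEigenvector
  exact ⟨v, hv.2, by simpa using hv.apply_eq_smul⟩

section Lyapunov

variable {𝕜 n : Type*} [RCLike 𝕜] [Fintype n] [DecidableEq n]

theorem norm_lt_one_of_mem_spectrum_of_lyapunov {P L : Matrix n n 𝕜} (hP : P.PosSemidef)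
    (hLyap : (P - L * P * Lᴴ).PosDef) {μ : 𝕜} (hμ : μ ∈ spectrum 𝕜 L) : ‖μ‖ < 1 := by
  -- a left eigenvector of `L`, obtained as an eigenvector of `Lᴴ`
  have hμ' : star μ ∈ spectrum 𝕜 Lᴴ := by
    rw [← star_eq_conjTranspose, spectrum.map_star, Set.star_mem_star]
    exact hμ
  obtain ⟨v, hv0, hv⟩ := exists_mulVec_eq_smul_of_mem_spectrum hμ'
  have hleft : ∀ w, star v ⬝ᵥ (L *ᵥ w) = μ * (star v ⬝ᵥ w) := fun w => by
    rw [dotProduct_mulVec, ← conjTranspose_conjTranspose L, ← star_mulVec, hv, star_smul,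
      star_star, smul_dotProduct, smul_eq_mul]
  set p := star v ⬝ᵥ (P *ᵥ v)
  have hquad : star v ⬝ᵥ ((P - L * P * Lᴴ) *ᵥ v) = ((1 - ‖μ‖ ^ 2 : ℝ) : 𝕜) * p := by
    rw [sub_mulVec, dotProduct_sub, ← mulVec_mulVec, ← mulVec_mulVec, hv, mulVec_smul, hleft,
      dotProduct_smul, smul_eq_mul, ← mul_assoc, RCLike.star_def, RCLike.mul_conj]
    push_cast
    ring
  have hpos := hLyap.dotProduct_mulVec_pos hv0
  rw [hquad, RCLike.pos_iff, RCLike.re_ofReal_mul] at hpos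
  have hp : 0 ≤ RCLike.re p := (RCLike.nonneg_iff.mp (hP.dotProduct_mulVec_nonneg v)).1
  have hμ2 : ‖μ‖ ^ 2 < 1 := sub_pos.mp (pos_of_mul_pos_left hpos.1 hp)
  exact (sq_lt_one_iff₀ (norm_nonneg μ)).mp hμ2

end Lyapunov

section Complexification

variable {n : Type*} [Fintype n]

theorem map_ofReal_mul {l m : Type*} (M : Matrix l n ℝ) (N : Matrix n m ℝ) :
    (M * N).map Complex.ofReal = M.map Complex.ofReal * N.map Complex.ofReal :=
  Matrix.map_mul (f := Complex.ofRealHom)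

omit [Fintype n] in
theorem conjTranspose_map_ofReal {m : Type*} (M : Matrix m n ℝ) :
    (M.map Complex.ofReal)ᴴ = Mᵀ.map Complex.ofReal := by
  ext i j
  simp [conjTranspose_apply]

theorem PosSemidef.map_ofReal [DecidableEq n] {M : Matrix n n ℝ} (hM : M.PosSemidef) :
    (M.map Complex.ofReal).PosSemidef := by
  open scoped MatrixOrder in
  obtain ⟨B, rfl⟩ := CStarAlgebra.nonneg_iff_eq_star_mul_self.mp hM.nonneg
  rw [star_eq_conjTranspose, map_ofReal_mul, conjTranspose_eq_transpose_of_trivial,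
    ← conjTranspose_map_ofReal]
  exact posSemidef_conjTranspose_mul_self _

theorem PosDef.map_ofReal [DecidableEq n] {M : Matrix n n ℝ} (hM : M.PosDef) :
    (M.map Complex.ofReal).PosDef := by
  refine hM.posSemidef.map_ofReal.posDef_iff_isUnit.mpr ?_
  rw [isUnit_iff_isUnit_det]
  exact (RingHom.map_det Complex.ofRealHom M) ▸ (((isUnit_iff_isUnit_det M).mp hM.isUnit).map _)

theorem norm_lt_one_of_mem_spectrum_map_ofReal_of_lyapunov [DecidableEq n] {P L : Matrix n n ℝ}
    (hP : P.PosSemidef) (hLyap : (P - L * P * Lᵀ).PosDef) {μ : ℂ}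
    (hμ : μ ∈ spectrum ℂ (L.map Complex.ofReal)) : ‖μ‖ < 1 := by
  refine norm_lt_one_of_mem_spectrum_of_lyapunov hP.map_ofReal ?_ hμ
  rw [conjTranspose_map_ofReal, ← map_ofReal_mul, ← map_ofReal_mul,
    ← Matrix.map_sub _ Complex.ofReal_sub]
  exact hLyap.map_ofReal

end Complexification

section BlockCovariance

variable {R l m n : Type*} [CommRing R] [Fintype m] [Fintype n]

theorem fromCols_mul_fromBlocks_mul_transpose_fromCols (A : Matrix l m R) (B : Matrix l n R)
    {S₁₁ : Matrix m m R} {S₂₁ : Matrix n m R} (S₂₂ : Matrix n n R) {K : Matrix n m R}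
    (hS : S₁₁ᵀ = S₁₁) (hK : K * S₁₁ = S₂₁) :
    fromCols A B * fromBlocks S₁₁ S₂₁ᵀ S₂₁ S₂₂ * (fromCols A B)ᵀ =
      (A + B * K) * S₁₁ * (A + B * K)ᵀ + B * (S₂₂ - K * S₁₁ * Kᵀ) * Bᵀ := by
  have hKt : S₁₁ * Kᵀ = S₂₁ᵀ := by rw [← hK, transpose_mul, hS]
  rw [fromCols_mul_fromBlocks, transpose_fromCols, fromCols_mul_fromRows]
  simp only [transpose_add, transpose_mul, Matrix.add_mul, Matrix.mul_add, Matrix.mul_sub,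
    Matrix.sub_mul, Matrix.mul_assoc]
  rw [← Matrix.mul_assoc K S₁₁, hK, ← Matrix.mul_assoc S₁₁, hKt]
  abel

theorem PosSemidef.sub_mul_mul_transpose_of_fromBlocks [DecidableEq n] {S₁₁ : Matrix m m ℝ}
    {S₂₁ : Matrix n m ℝ} {S₂₂ : Matrix n n ℝ} (hS : (fromBlocks S₁₁ S₂₁ᵀ S₂₁ S₂₂).PosSemidef)
    {K : Matrix n m ℝ} (hK : K * S₁₁ = S₂₁) : (S₂₂ - K * S₁₁ * Kᵀ).PosSemidef := by
  have hS₁₁ : S₁₁ᵀ = S₁₁ := by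
    simpa [fromBlocks_transpose] using congrArg toBlocks₁₁ hS.isHermitian.eq
  -- conjugating by `(-K 1)` cancels the cross terms and leaves the Schur complement
  have h := hS.mul_mul_conjTranspose_same (fromCols (-K) 1)
  rwa [conjTranspose_eq_transpose_of_trivial,
    fromCols_mul_fromBlocks_mul_transpose_fromCols _ _ _ hS₁₁ hK, Matrix.one_mul,
    neg_add_cancel, Matrix.zero_mul, Matrix.zero_mul, zero_add, Matrix.one_mul,
    transpose_one, Matrix.mul_one] at h

end BlockCovariance

end Matrix

/-- if `Σ ⪰ 0` with positive definite block `Σ_xx` satisfies the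
Lyapunov-type inequality `Σ_xx ⪰ (A B) Σ (A B)ᵀ + σ_w² I`, then `K = Σ_ux Σ_xx⁻¹`
stabilizes `(A, B)`: every complex eigenvalue of `A + B K` has modulus `< 1`. -/
theorem controller_stabilizes (dx du : ℕ)
    (Sxx : Matrix (Fin dx) (Fin dx) ℝ) (Sxu : Matrix (Fin dx) (Fin du) ℝ)
    (Sux : Matrix (Fin du) (Fin dx) ℝ) (Suu : Matrix (Fin du) (Fin du) ℝ)
    (hpsd : (Matrix.fromBlocks Sxx Sxu Sux Suu).PosSemidef)
    (hxx : Sxx.PosDef)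
    (hsym : Sxu = Suxᵀ)
    (A : Matrix (Fin dx) (Fin dx) ℝ) (B : Matrix (Fin dx) (Fin du) ℝ)
    (σw : ℝ) (hσw : 0 < σw)
    (hcon : (Sxx -
      (Matrix.fromCols A B * Matrix.fromBlocks Sxx Sxu Sux Suu *
        (Matrix.fromCols A B)ᵀ + σw ^ 2 • (1 : Matrix (Fin dx) (Fin dx) ℝ))).PosSemidef)
    (K : Matrix (Fin du) (Fin dx) ℝ) (hK : K = Sux * Sxx⁻¹) :
    ∀ μ ∈ spectrum ℂ ((A + B * K).map Complex.ofReal), ‖μ‖ < 1 := by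
  subst hsym
  have hKS : K * Sxx = Sux := by
    rw [hK, Matrix.mul_assoc, nonsing_inv_mul _ ((isUnit_iff_isUnit_det _).mp hxx.isUnit),
      Matrix.mul_one]
  have hSxx : Sxxᵀ = Sxx := by simpa using hxx.isHermitian.eq
  have hLyap : (Sxx - (A + B * K) * Sxx * (A + B * K)ᵀ).PosDef := by
    have hnoise : (σw ^ 2 • (1 : Matrix (Fin dx) (Fin dx) ℝ)).PosDef :=
      PosDef.one.smul (pow_pos hσw 2)
    have hSchur := (hpsd.sub_mul_mul_transpose_of_fromBlocks hKS).mul_mul_conjTranspose_same B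
    rw [fromCols_mul_fromBlocks_mul_transpose_fromCols A B Suu hSxx hKS] at hcon
    rw [conjTranspose_eq_transpose_of_trivial] at hSchur
    convert PosDef.posSemidef_add (hcon.add hSchur) hnoise using 1
    abel
  exact fun μ hμ => norm_lt_one_of_mem_spectrum_map_ofReal_of_lyapunov hxx.posSemidef hLyap hμ
end

section
/- Fix σ_w > 0, d_x, d_u ∈ ℕ, symmetric matrices Â-related data matrix (Â B̂) ∈ ℝ^{d_x×(d_x+d_u)} and D ≻ 0 of size (d_x+d_u). The following are equivalent: (i) there exist U ⪰ 0 (of size d_x+d_u, with top-left d_x×d_x block U_xx) and s ∈ (0,1) such that [[U_xx − (Â B̂)U(Â B̂)^⊤ − I, (Â B̂)U],[U(Â B̂)^⊤, sD − U]] ⪰ 0; (ii) there exist Σ ⪰ 0 (same size, top-left block Σ_xx) and t ≥ 0 such that [[Σ_xx − (Â B̂)Σ(Â B̂)^⊤ − (t+σ_w²)I, (Â B̂)Σ],[Σ(Â B̂)^⊤, tD − Σ]] ⪰ 0. Moreover, the maps s ↦ t = sσ_w²/(1−s), U ↦ Σ = σ_w²U/(1−s) and t ↦ s = t/(t+σ_w²),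 Σ ↦ U = Σ/(t+σ_w²) realize the equivalence. -/
open Matrix

variable {dx du : ℕ}

/-- The block LMI of the Robust SLS feasibility condition (constraint (i)). -/
def slsConstraint (AB : Matrix (Fin dx) (Fin dx ⊕ Fin du) ℝ)
    (D U : Matrix (Fin dx ⊕ Fin du) (Fin dx ⊕ Fin du) ℝ) (s : ℝ) : Prop :=
  (Matrix.fromBlocks
    (U.toBlocks₁₁ - AB * U * ABᵀ - 1) (AB * U)
    (U * ABᵀ) (s • D - U)).PosSemidef

/-- The block LMI of the Robust LQR feasibility condition (constraint (ii)). -/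
def lqrConstraint (σw : ℝ) (AB : Matrix (Fin dx) (Fin dx ⊕ Fin du) ℝ)
    (D S : Matrix (Fin dx ⊕ Fin du) (Fin dx ⊕ Fin du) ℝ) (t : ℝ) : Prop :=
  (Matrix.fromBlocks
    (S.toBlocks₁₁ - AB * S * ABᵀ - (t + σw ^ 2) • 1) (AB * S)
    (S * ABᵀ) (t • D - S)).PosSemidef

/-!
Both constraints say that the block matrix
`M(X, r, κ) = [[X_xx - (Â B̂) X (Â B̂)ᵀ - κ I, (Â B̂) X], [X (Â B̂)ᵀ, r D - X]]`
is positive semidefinite, at `κ = 1` and at `κ = t + σ_w²` respectively, and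
`M(c X, c r, c κ) = c M(X, r, κ)`. Scaling by `c = t + σ_w²` or by its inverse therefore carries
a feasible pair of one problem to a feasible pair of the other. The only gap is `t = 0`, which is
sent to `s = 0`; as `D ⪰ 0`, `M` is monotone in `r`, so `s` can then be raised into `(0, 1)`.
-/

namespace Matrix

theorem PosSemidef.fromBlocks_zero_zero_zero {m n R : Type*} [Fintype m] [Fintype n]
    [DecidableEq n] [CommRing R] [PartialOrder R] [StarRing R] [StarOrderedRing R]
    {B : Matrix n n R} (hB : B.PosSemidef) :
    (fromBlocks (0 : Matrix m m R) 0 0 B).PosSemidef := by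
  convert hB.conjTranspose_mul_mul_same (fromCols (0 : Matrix n m R) (1 : Matrix n n R)) using 1
  ext (i | i) (j | j) <;> simp [conjTranspose_fromCols_eq_fromRows_conjTranspose, fromRows_mul]

end Matrix

section LMIBlock

variable {m n R : Type*} [Fintype m] [Fintype n] [DecidableEq m]

def lmiBlock [CommRing R] (AB : Matrix m (m ⊕ n) R) (D X : Matrix (m ⊕ n) (m ⊕ n) R) (r κ : R) :
    Matrix (m ⊕ (m ⊕ n)) (m ⊕ (m ⊕ n)) R :=
  fromBlocks (X.toBlocks₁₁ - AB * X * ABᵀ - κ • 1) (AB * X) (X * ABᵀ) (r • D - X)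

theorem lmiBlock_smul [CommRing R] (AB : Matrix m (m ⊕ n) R) (D X : Matrix (m ⊕ n) (m ⊕ n) R)
    (c r κ : R) : lmiBlock AB D (c • X) (c * r) (c * κ) = c • lmiBlock AB D X r κ := by
  simp only [lmiBlock, fromBlocks_smul, toBlocks₁₁, Matrix.mul_smul, Matrix.smul_mul, smul_sub,
    smul_smul]
  rfl

theorem lmiBlock_posSemidef_mono [DecidableEq n] (AB : Matrix m (m ⊕ n) ℝ)
    {D X : Matrix (m ⊕ n) (m ⊕ n) ℝ} (hD : D.PosSemidef) {r r' κ : ℝ} (hr : r ≤ r')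
    (h : (lmiBlock AB D X r κ).PosSemidef) :
    (lmiBlock AB D X r' κ).PosSemidef := by
  have hsplit : lmiBlock AB D X r' κ =
      lmiBlock AB D X r κ + fromBlocks (0 : Matrix m m ℝ) 0 0 ((r' - r) • D) := by
    simp only [lmiBlock, fromBlocks_add, add_zero, sub_smul]
    abel_nf
  rw [hsplit]
  exact h.add (hD.smul (sub_nonneg.2 hr)).fromBlocks_zero_zero_zero

end LMIBlock

section Constraints

variable {σw : ℝ} {AB : Matrix (Fin dx) (Fin dx ⊕ Fin du) ℝ}
  {D U S : Matrix (Fin dx ⊕ Fin du) (Fin dx ⊕ Fin du) ℝ} {s t : ℝ}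

theorem slsConstraint_iff : slsConstraint AB D U s ↔ (lmiBlock AB D U s 1).PosSemidef := by
  rw [slsConstraint, lmiBlock, one_smul]

theorem lqrConstraint_iff :
    lqrConstraint σw AB D S t ↔ (lmiBlock AB D S t (t + σw ^ 2)).PosSemidef := Iff.rfl

theorem slsConstraint.mono {s' : ℝ} (hD : D.PosSemidef) (hs : s ≤ s')
    (h : slsConstraint AB D U s) : slsConstraint AB D U s' :=
  slsConstraint_iff.2 <| lmiBlock_posSemidef_mono AB hD hs (slsConstraint_iff.1 h)

theorem slsConstraint.to_lqrConstraint (hU : U.PosSemidef) (hs₀ : 0 < s) (hs₁ : s < 1)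
    (h : slsConstraint AB D U s) :
    ((σw ^ 2 / (1 - s)) • U).PosSemidef ∧ 0 ≤ s * σw ^ 2 / (1 - s) ∧
      lqrConstraint σw AB D ((σw ^ 2 / (1 - s)) • U) (s * σw ^ 2 / (1 - s)) := by
  have h1s : 0 < 1 - s := sub_pos.2 hs₁
  have hc : 0 ≤ σw ^ 2 / (1 - s) := by positivity
  refine ⟨hU.smul hc, by positivity, lqrConstraint_iff.2 ?_⟩
  have hr : s * σw ^ 2 / (1 - s) = σw ^ 2 / (1 - s) * s := by ring
  have hκ : s * σw ^ 2 / (1 - s) + σw ^ 2 = σw ^ 2 / (1 - s) * 1 := by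
    field_simp
    ring
  rw [hκ, hr, lmiBlock_smul]
  exact (slsConstraint_iff.1 h).smul hc

theorem lqrConstraint.to_slsConstraint (hσw : 0 < σw) (hS : S.PosSemidef) (ht : 0 ≤ t)
    (h : lqrConstraint σw AB D S t) :
    ((1 / (t + σw ^ 2)) • S).PosSemidef ∧ 0 ≤ t / (t + σw ^ 2) ∧ t / (t + σw ^ 2) < 1 ∧
      slsConstraint AB D ((1 / (t + σw ^ 2)) • S) (t / (t + σw ^ 2)) := by
  have hκ : 0 < t + σw ^ 2 := by positivity
  have hc : 0 ≤ 1 / (t + σw ^ 2) := by positivity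
  refine ⟨hS.smul hc, by positivity, (div_lt_one hκ).2 (by linarith [pow_pos hσw 2]),
    slsConstraint_iff.2 ?_⟩
  have := (lqrConstraint_iff.1 h).smul hc
  rwa [← lmiBlock_smul, one_div_mul_cancel hκ.ne', one_div_mul_eq_div] at this

end Constraints

/-- feasibility of the Robust SLS LMI and of the Robust LQR LMI are
equivalent, and the equivalence is realized by the explicit maps
`t = s σ_w²/(1−s)`, `Σ = σ_w² U/(1−s)` and `s = t/(t+σ_w²)`, `U = Σ/(t+σ_w²)`. -/
theorem sls_lqr_feasibility_equivalence (σw : ℝ) (hσw : 0 < σw)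
    (AB : Matrix (Fin dx) (Fin dx ⊕ Fin du) ℝ)
    (D : Matrix (Fin dx ⊕ Fin du) (Fin dx ⊕ Fin du) ℝ) (hD : D.PosDef) :
    ((∃ (U : Matrix (Fin dx ⊕ Fin du) (Fin dx ⊕ Fin du) ℝ) (s : ℝ),
        U.PosSemidef ∧ 0 < s ∧ s < 1 ∧ slsConstraint AB D U s) ↔
      (∃ (S : Matrix (Fin dx ⊕ Fin du) (Fin dx ⊕ Fin du) ℝ) (t : ℝ),
        S.PosSemidef ∧ 0 ≤ t ∧ lqrConstraint σw AB D S t)) ∧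
    (∀ (U : Matrix (Fin dx ⊕ Fin du) (Fin dx ⊕ Fin du) ℝ) (s : ℝ),
        U.PosSemidef → 0 < s → s < 1 → slsConstraint AB D U s →
        ((σw ^ 2 / (1 - s)) • U).PosSemidef ∧ 0 ≤ s * σw ^ 2 / (1 - s) ∧
          lqrConstraint σw AB D ((σw ^ 2 / (1 - s)) • U) (s * σw ^ 2 / (1 - s))) ∧
    (∀ (S : Matrix (Fin dx ⊕ Fin du) (Fin dx ⊕ Fin du) ℝ) (t : ℝ),
        S.PosSemidef → 0 ≤ t → lqrConstraint σw AB D S t →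
        ((1 / (t + σw ^ 2)) • S).PosSemidef ∧ 0 ≤ t / (t + σw ^ 2) ∧
          t / (t + σw ^ 2) < 1 ∧
          slsConstraint AB D ((1 / (t + σw ^ 2)) • S) (t / (t + σw ^ 2))) := by
  refine ⟨⟨fun ⟨U, s, hU, hs₀, hs₁, h⟩ => ⟨_, _, h.to_lqrConstraint hU hs₀ hs₁⟩, ?_⟩,
    fun U s hU hs₀ hs₁ h => h.to_lqrConstraint hU hs₀ hs₁,
    fun S t hS ht h => h.to_slsConstraint hσw hS ht⟩
  rintro ⟨S, t, hS, ht, h⟩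
  obtain ⟨hU, hs₀, hs₁, h⟩ := h.to_slsConstraint hσw hS ht
  exact ⟨_, (t / (t + σw ^ 2) + 1) / 2, hU, by linarith, by linarith,
    h.mono hD.posSemidef (by linarith)⟩
end

section
/- Let D ≻ 0 and let Σ_xx, Σ, (Â B̂) and σ_w² be as in the setting of the paper. If there exists t ≥ 0 such that [[Σ_xx − (Â B̂)Σ(Â B̂)^⊤ − (t+σ_w²)I, (Â B̂)Σ],[Σ(Â B̂)^⊤, tD − Σ]] ⪰ 0, then for every Δ with Δ^⊤DΔ ⪯ I, writing (A B) = (Â B̂) + Δ^⊤, one has Σ_xx ⪰ (A B)Σ(A B)^⊤ + σ_w²I. -/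
open Matrix

lemma posSemidef_smul_nonneg {n : Type*} [Fintype n] {A : Matrix n n ℝ}
    (hA : A.PosSemidef) {t : ℝ} (ht : 0 ≤ t) : (t • A).PosSemidef := by
  constructor
  · unfold Matrix.IsHermitian
    rw [conjTranspose_smul, hA.1]
    simp
  · intro x
    exact (hA.smul ht).2 x

/-- S-lemma, sufficiency direction: if for some `t ≥ 0` the LMI
`[[Σ_xx − (Â B̂)Σ(Â B̂)ᵀ − (t+σ_w²)I, (Â B̂)Σ],[Σ(Â B̂)ᵀ, tD − Σ]] ⪰ 0` holds,
then for every `Δ` with `ΔᵀDΔ ⪯ I` and `(A B) = (Â B̂) + Δᵀ` one has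
`Σ_xx ⪰ (A B)Σ(A B)ᵀ + σ_w² I`. -/
theorem s_lemma_sufficiency (dx du : ℕ)
    (S : Matrix (Fin dx ⊕ Fin du) (Fin dx ⊕ Fin du) ℝ) (hS : S.PosSemidef)
    (AB : Matrix (Fin dx) (Fin dx ⊕ Fin du) ℝ)
    (D : Matrix (Fin dx ⊕ Fin du) (Fin dx ⊕ Fin du) ℝ) (hD : D.PosDef)
    (σw : ℝ) (hσw : 0 < σw)
    (t : ℝ) (ht : 0 ≤ t)
    (hLMI : (Matrix.fromBlocks
      (S.toBlocks₁₁ - AB * S * ABᵀ - (t + σw ^ 2) • 1) (AB * S)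
      (S * ABᵀ) (t • D - S)).PosSemidef) :
    ∀ Δ : Matrix (Fin dx ⊕ Fin du) (Fin dx) ℝ,
      ((1 : Matrix (Fin dx) (Fin dx) ℝ) - Δᵀ * D * Δ).PosSemidef →
      (S.toBlocks₁₁ - ((AB + Δᵀ) * S * (AB + Δᵀ)ᵀ +
        σw ^ 2 • (1 : Matrix (Fin dx) (Fin dx) ℝ))).PosSemidef := by
  intro Δ hΔ
  set M := (Matrix.fromBlocks
      (S.toBlocks₁₁ - AB * S * ABᵀ - (t + σw ^ 2) • 1) (AB * S)
      (S * ABᵀ) (t • D - S)) with hM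
  set K : Matrix (Fin dx ⊕ (Fin dx ⊕ Fin du)) (Fin dx) ℝ :=
    fromRows (1 : Matrix (Fin dx) (Fin dx) ℝ) (-Δ) with hK
  have hKH : Kᴴ = Kᵀ := by
    ext i j; simp [conjTranspose_apply]
  have h1 : (Kᴴ * M * K).PosSemidef := hLMI.conjTranspose_mul_mul_same K
  have h2 : (t • ((1 : Matrix (Fin dx) (Fin dx) ℝ) - Δᵀ * D * Δ)).PosSemidef :=
    posSemidef_smul_nonneg hΔ ht
  have key : S.toBlocks₁₁ - ((AB + Δᵀ) * S * (AB + Δᵀ)ᵀ +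
      σw ^ 2 • (1 : Matrix (Fin dx) (Fin dx) ℝ)) =
      Kᴴ * M * K + t • ((1 : Matrix (Fin dx) (Fin dx) ℝ) - Δᵀ * D * Δ) := by
    rw [hKH, hK, hM, transpose_fromRows, fromCols_mul_fromBlocks,
      fromCols_mul_fromRows]
    simp only [Matrix.mul_one, Matrix.one_mul, transpose_one, transpose_neg,
      Matrix.mul_neg, Matrix.neg_mul, Matrix.sub_mul, Matrix.mul_sub,
      Matrix.add_mul, Matrix.mul_add, transpose_add, Matrix.smul_mul,
      Matrix.mul_smul, smul_sub, add_smul, Matrix.mul_assoc, transpose_transpose, neg_smul, smul_neg]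
    abel
  rw [key]
  exact h1.add h2
end

section
/- In the setting of the previous statement (Σ ⪰ 0, Σ_xx ≻ 0, K = Σ_ux Σ_xx^{-1}, σ_w² I ⪯ Σ_xx, ν = Tr(Σ), κ² = ν/σ_w²), the controller K satisfies ‖K‖₂ ≤ ‖K‖_F ≤ κ. -/
open Matrix

noncomputable def opNorm {m n : Type*} [Fintype m] [Fintype n] [DecidableEq n]
    (M : Matrix m n ℝ) : ℝ :=
  ‖(Matrix.toEuclideanLin M).toContinuousLinearMap‖

noncomputable def frobNorm {m n : Type*} [Fintype m] [Fintype n]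
    (M : Matrix m n ℝ) : ℝ :=
  Real.sqrt (∑ i, ∑ j, (M i j) ^ 2)

/-!
Write `Σ = [[Σxx, Σxu], [Σux, Σuu]]`. Since `Σ` is symmetric, `Σux = Σxuᵀ`, so
`K Σxx Kᵀ = Σxuᵀ Σxx⁻¹ Σxu`, which is dominated by `Σuu` because the Schur complement
`Σuu - Σxuᵀ Σxx⁻¹ Σxu` of the positive definite block `Σxx` is positive semidefinite.
Taking traces and using `σw² I ⪯ Σxx`,
`σw² ‖K‖_F² = σw² Tr (K Kᵀ) ≤ Tr (K Σxx Kᵀ) ≤ Tr Σuu ≤ Tr Σ = ν`.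
The bound `‖K‖₂ ≤ ‖K‖_F` is Cauchy–Schwarz applied row by row.
-/

namespace Matrix

variable {m n : Type*} [Fintype m]

theorem IsHermitian.mul_mul_conjTranspose_conjTranspose_mul_inv [DecidableEq m]
    {A : Matrix m m ℝ} (hA : A.IsHermitian) (hdet : IsUnit A.det) (B : Matrix m n ℝ) :
    (Bᴴ * A⁻¹) * A * (Bᴴ * A⁻¹)ᴴ = Bᴴ * A⁻¹ * B := by
  rw [nonsing_inv_mul_cancel_right (A := A) Bᴴ hdet, conjTranspose_mul, conjTranspose_nonsing_inv,
    hA.eq, conjTranspose_conjTranspose, Matrix.mul_assoc]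

variable [Fintype n]

theorem opNorm_le_frobNorm [DecidableEq n] (M : Matrix m n ℝ) : opNorm M ≤ frobNorm M := by
  refine ContinuousLinearMap.opNorm_le_bound _ (Real.sqrt_nonneg _) fun x => ?_
  rw [EuclideanSpace.norm_eq, EuclideanSpace.norm_eq, frobNorm, ← Real.sqrt_mul (by positivity)]
  refine Real.sqrt_le_sqrt ?_
  simp only [LinearMap.coe_toContinuousLinearMap', toLpLin_apply, Real.norm_eq_abs, sq_abs,
    mulVec, dotProduct]
  rw [Finset.sum_mul]
  exact Finset.sum_le_sum fun i _ => Finset.sum_mul_sq_le_sq_mul_sq _ _ _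

theorem frobNorm_sq_eq_trace (M : Matrix m n ℝ) : frobNorm M ^ 2 = (M * Mᴴ).trace := by
  rw [frobNorm, Real.sq_sqrt (by positivity)]
  simp [trace, mul_apply, pow_two]

theorem trace_fromBlocks {R : Type*} [AddCommMonoid R] (A : Matrix m m R) (B : Matrix m n R)
    (C : Matrix n m R) (D : Matrix n n R) : (fromBlocks A B C D).trace = A.trace + D.trace := by
  simp [trace, Fintype.sum_sum_type]

theorem PosSemidef.mul_trace_mul_conjTranspose_le [DecidableEq n] {A : Matrix n n ℝ} {c : ℝ}
    (h : (A - c • 1).PosSemidef) (K : Matrix m n ℝ) :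
    c * (K * Kᴴ).trace ≤ (K * A * Kᴴ).trace := by
  have := (h.mul_mul_conjTranspose_same K).trace_nonneg
  rwa [Matrix.mul_sub, Matrix.sub_mul, Matrix.mul_smul, Matrix.mul_one, Matrix.smul_mul,
    trace_sub, trace_smul, smul_eq_mul, sub_nonneg] at this

theorem PosDef.trace_conjTranspose_mul_inv_mul_le [DecidableEq m] {A : Matrix m m ℝ}
    {B : Matrix m n ℝ} {D : Matrix n n ℝ} (hA : A.PosDef)
    (h : (fromBlocks A B Bᴴ D).PosSemidef) :
    (Bᴴ * A⁻¹ * B).trace ≤ D.trace := by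
  let _ := hA.isUnit.invertible
  have := ((hA.fromBlocks₁₁ B D).mp h).trace_nonneg
  rwa [trace_sub, sub_nonneg] at this

end Matrix

/-- in the strong-stability setting (`Σ ⪰ 0`, `Σ_xx ≻ 0`,
`K = Σ_ux Σ_xx⁻¹`, `σ_w²I ⪯ Σ_xx`, `ν = Tr Σ`, `κ = √(ν/σ_w²)`), the controller
satisfies `‖K‖₂ ≤ ‖K‖_F ≤ κ`. -/
theorem strong_stability_controller_norm (dx du : ℕ)
    (Sxx : Matrix (Fin dx) (Fin dx) ℝ) (Sxu : Matrix (Fin dx) (Fin du) ℝ)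
    (Sux : Matrix (Fin du) (Fin dx) ℝ) (Suu : Matrix (Fin du) (Fin du) ℝ)
    (hpsd : (Matrix.fromBlocks Sxx Sxu Sux Suu).PosSemidef)
    (hxx : Sxx.PosDef)
    (σw : ℝ) (hσw : 0 < σw)
    (hlow : (Sxx - σw ^ 2 • (1 : Matrix (Fin dx) (Fin dx) ℝ)).PosSemidef)
    (K : Matrix (Fin du) (Fin dx) ℝ) (hK : K = Sux * Sxx⁻¹)
    (ν : ℝ) (hν : ν = Matrix.trace (Matrix.fromBlocks Sxx Sxu Sux Suu)) :
    opNorm K ≤ frobNorm K ∧ frobNorm K ≤ Real.sqrt (ν / σw ^ 2) := by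
  refine ⟨opNorm_le_frobNorm K, ?_⟩
  obtain rfl : Sux = Sxuᴴ := (isHermitian_fromBlocks_iff.mp hpsd.1).2.1.symm
  have hdet : IsUnit Sxx.det := (isUnit_iff_isUnit_det _).mp hxx.isUnit
  have hquad : σw ^ 2 * frobNorm K ^ 2 ≤ ν :=
    calc σw ^ 2 * frobNorm K ^ 2 = σw ^ 2 * (K * Kᴴ).trace := by rw [frobNorm_sq_eq_trace]
      _ ≤ (K * Sxx * Kᴴ).trace := hlow.mul_trace_mul_conjTranspose_le K
      _ = (Sxuᴴ * Sxx⁻¹ * Sxu).trace := by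
        rw [hK, hxx.1.mul_mul_conjTranspose_conjTranspose_mul_inv hdet]
      _ ≤ Suu.trace := hxx.trace_conjTranspose_mul_inv_mul_le hpsd
      _ ≤ ν := by
        rw [hν, trace_fromBlocks]
        have := hxx.posSemidef.trace_nonneg
        linarith
  exact Real.le_sqrt_of_sq_le ((le_div_iff₀ (by positivity)).mpr (by linarith))
end

section
/- Let A, B, K be matrices with ρ(A+BK) < 1, and let Â, B̂ satisfy ‖A − Â‖₂ ≤ ε_A, ‖B − B̂‖₂ ≤ ε_B. Define ζ = (ε_A + ε_B‖K‖₂) · sup_{|z|=1} ‖(zI − A − BK)^{-1}‖₂. If ζ ≤ 1/(1+√2), then for every Δ^⊤ = (A B) − (Â B̂) one has, for all z on the unit circle, ‖Δ^⊤ (I;K) (zI − Â − B̂K)^{-1}‖₂ < 1 (the robust SLS H∞ constraint is satisfied). -/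
open Matrix

noncomputable def opNormC {m n : Type*} [Fintype m] [Fintype n] [DecidableEq n]
    (M : Matrix m n ℂ) : ℝ :=
  ‖(Matrix.toEuclideanLin M).toContinuousLinearMap‖

/-!
Write `M = A + BK` and `D = Δᵀ(I;K) = (A - Â) + (B - B̂)K`, so that `zI - Â - B̂K = (zI - M) + D`.
On the unit circle `‖(zI - M)⁻¹‖ ‖D‖ ≤ ζ < 1/2`, hence `zI - M + D` is invertible, and
`Y = D (zI - M + D)⁻¹` satisfies `Y = D (zI - M)⁻¹ (1 - Y)`, which gives `‖Y‖ ≤ ζ / (1 - ζ) < 1`.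
-/

section NormedRing

variable {R : Type*} [NormedRing R]

theorem isUnit_add_of_norm_inv_mul_norm_lt_one [HasSummableGeomSeries R] (u : Rˣ) {d : R}
    (h : ‖(↑u⁻¹ : R)‖ * ‖d‖ < 1) : IsUnit ((u : R) + d) := by
  have hsmall : ‖-(↑u⁻¹ * d)‖ < 1 := by
    rw [norm_neg]; exact (norm_mul_le _ _).trans_lt h
  have hfactor : (u : R) + d = u * (1 - -(↑u⁻¹ * d)) := by
    rw [sub_neg_eq_add, mul_add, mul_one, Units.mul_inv_cancel_left]
  exact hfactor ▸ u.isUnit.mul (isUnit_one_sub_of_norm_lt_one hsmall)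

theorem norm_mul_inv_le_of_eq_add (u x : Rˣ) {d : R} (hx : (x : R) = u + d) {b : ℝ}
    (hb : ‖(↑u⁻¹ : R)‖ * ‖d‖ ≤ b) (hb1 : b < 1) :
    ‖d * ↑x⁻¹‖ ≤ b / (1 - b) := by
  set a := d * ↑u⁻¹
  have hfix : d * ↑x⁻¹ = a - a * (d * ↑x⁻¹) := by
    have hd : d = a * x - a * d := by
      rw [hx, mul_add, Units.inv_mul_cancel_right, add_sub_cancel_right]
    calc d * ↑x⁻¹ = (a * x - a * d) * ↑x⁻¹ := by rw [← hd]
      _ = a - a * (d * ↑x⁻¹) := by rw [sub_mul, Units.mul_inv_cancel_right, mul_assoc]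
  have ha : ‖a‖ ≤ b := (norm_mul_le _ _).trans (by rw [mul_comm]; exact hb)
  have hy : ‖d * ↑x⁻¹‖ ≤ b + b * ‖d * ↑x⁻¹‖ :=
    calc ‖d * ↑x⁻¹‖ ≤ ‖a‖ + ‖a‖ * ‖d * ↑x⁻¹‖ := by
          nth_rw 1 [hfix]
          exact (norm_sub_le _ _).trans (add_le_add_right (norm_mul_le _ _) _)
      _ ≤ b + b * ‖d * ↑x⁻¹‖ := by gcongr
  rw [le_div_iff₀ (by linarith)]
  linarith

end NormedRing

theorem bddAbove_norm_resolvent_image {𝕜 A : Type*} [NontriviallyNormedField 𝕜] [NormedRing A]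
    [NormedAlgebra 𝕜 A] [CompleteSpace A] (a : A) {K : Set 𝕜} (hK : IsCompact K)
    (h : K ⊆ resolventSet 𝕜 a) : BddAbove ((fun k ↦ ‖resolvent a k‖) '' K) :=
  hK.bddAbove_image <| continuous_norm.comp_continuousOn fun _ hk ↦
    (spectrum.hasDerivAt_resolvent_const_left (h hk)).continuousAt.continuousWithinAt

theorem Matrix.resolvent_eq_inv {R n : Type*} [CommRing R] [Fintype n] [DecidableEq n]
    (M : Matrix n n R) (z : R) : resolvent M z = (z • 1 - M)⁻¹ := by
  rw [resolvent, Algebra.algebraMap_eq_smul_one, nonsing_inv_eq_ringInverse]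

open scoped Matrix.Norms.L2Operator

theorem opNorm_eq_norm {m n : Type*} [Fintype m] [Fintype n] [DecidableEq n]
    (M : Matrix m n ℝ) : opNorm M = ‖M‖ := rfl

theorem opNormC_eq_norm {m n : Type*} [Fintype m] [Fintype n] [DecidableEq n]
    (M : Matrix m n ℂ) : opNormC M = ‖M‖ := rfl

theorem Matrix.opNormC_inv_le_iSup_sphere {n : Type*} [Fintype n] [DecidableEq n]
    (M : Matrix n n ℂ) (hM : ∀ z : ℂ, ‖z‖ = 1 → z ∉ spectrum ℂ M) {z : ℂ} (hz : ‖z‖ = 1) :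
    opNormC ((z • 1 - M)⁻¹) ≤ ⨆ w : {w : ℂ // ‖w‖ = 1}, opNormC ((w.1 • 1 - M)⁻¹) := by
  have : CompleteSpace (Matrix n n ℂ) := FiniteDimensional.complete ℂ _
  have hsphere : IsCompact {w : ℂ | ‖w‖ = 1} := by
    simpa only [Metric.sphere, dist_zero_right] using isCompact_sphere (0 : ℂ) 1
  have hbdd := bddAbove_norm_resolvent_image M hsphere fun w hw ↦ not_not.mp (hM w hw)
  have hres : (fun w ↦ ‖resolvent M w‖) = fun w : ℂ ↦ opNormC ((w • 1 - M)⁻¹) := by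
    ext w; rw [Matrix.resolvent_eq_inv, opNormC_eq_norm]
  rw [hres, Set.image_eq_range] at hbdd
  exact le_ciSup hbdd ⟨z, hz⟩

theorem EuclideanSpace.norm_sq_eq_norm_re_sq_add_norm_im_sq {n : Type*} [Fintype n]
    (x : EuclideanSpace ℂ n) :
    ‖x‖ ^ 2 = ‖WithLp.toLp 2 fun i ↦ (x i).re‖ ^ 2 + ‖WithLp.toLp 2 fun i ↦ (x i).im‖ ^ 2 := by
  simp only [EuclideanSpace.norm_sq_eq, ← Finset.sum_add_distrib, Complex.sq_norm,
    Complex.normSq_apply, Real.norm_eq_abs, sq_abs]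
  exact Finset.sum_congr rfl fun i _ ↦ by ring

theorem Matrix.mulVec_map_ofReal_re {m n : Type*} [Fintype n] (X : Matrix m n ℝ) (v : n → ℂ)
    (i : m) : ((X.map Complex.ofReal *ᵥ v) i).re = (X *ᵥ fun j ↦ (v j).re) i := by
  simp [mulVec, dotProduct, Complex.re_sum]

theorem Matrix.mulVec_map_ofReal_im {m n : Type*} [Fintype n] (X : Matrix m n ℝ) (v : n → ℂ)
    (i : m) : ((X.map Complex.ofReal *ᵥ v) i).im = (X *ᵥ fun j ↦ (v j).im) i := by
  simp [mulVec, dotProduct, Complex.im_sum]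

theorem opNormC_map_ofReal_le {m n : Type*} [Fintype m] [Fintype n] [DecidableEq n]
    (X : Matrix m n ℝ) : opNormC (X.map Complex.ofReal) ≤ opNorm X := by
  refine ContinuousLinearMap.opNorm_le_bound _ (norm_nonneg _) fun x ↦ ?_
  set T := (toEuclideanLin X).toContinuousLinearMap
  have himage : ‖(toEuclideanLin (X.map Complex.ofReal)).toContinuousLinearMap x‖ ^ 2 =
      ‖T (WithLp.toLp 2 fun i ↦ (x i).re)‖ ^ 2 + ‖T (WithLp.toLp 2 fun i ↦ (x i).im)‖ ^ 2 := by
    rw [EuclideanSpace.norm_sq_eq_norm_re_sq_add_norm_im_sq]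
    simp only [LinearMap.coe_toContinuousLinearMap', toLpLin_apply, PiLp.toLp_apply,
      mulVec_map_ofReal_re, mulVec_map_ofReal_im]
    rfl
  refine le_of_pow_le_pow_left₀ two_ne_zero (mul_nonneg (norm_nonneg T) (norm_nonneg x)) ?_
  rw [himage, mul_pow, EuclideanSpace.norm_sq_eq_norm_re_sq_add_norm_im_sq x, mul_add,
    ← mul_pow, ← mul_pow]
  gcongr <;> exact T.le_opNorm _

theorem opNorm_add_mul_le {m n k : Type*} [Fintype m] [Fintype n] [Fintype k] [DecidableEq n]
    [DecidableEq k] {E : Matrix m n ℝ} {F : Matrix m k ℝ} {G : Matrix k n ℝ} {ε δ : ℝ}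
    (hE : opNorm E ≤ ε) (hF : opNorm F ≤ δ) : opNorm (E + F * G) ≤ ε + δ * opNorm G := by
  rw [opNorm_eq_norm] at hE hF ⊢
  have hFG : ‖F * G‖ ≤ ‖F‖ * ‖G‖ := l2_opNorm_mul F G
  calc ‖E + F * G‖ ≤ ‖E‖ + ‖F‖ * ‖G‖ := (norm_add_le _ _).trans (by gcongr)
    _ ≤ ε + δ * ‖G‖ := by gcongr

/- Without the ascription on `1`, the rectangular product elaborates through the instance of
`CStarMatrix`, and this lemma no longer rewrites matrix products. -/
theorem Matrix.fromCols_sub_fromCols_mul_fromRows_one {R m n k : Type*} [Ring R] [Fintype n]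
    [Fintype k] [DecidableEq n] (A Ahat : Matrix m n R) (B Bhat : Matrix m k R)
    (K : Matrix k n R) :
    (fromCols A B - fromCols Ahat Bhat) * fromRows (1 : Matrix n n R) K =
      (A - Ahat) + (B - Bhat) * K := by
  have hsub : fromCols A B - fromCols Ahat Bhat = fromCols (A - Ahat) (B - Bhat) := by
    ext i (j | j) <;> rfl
  rw [hsub, fromCols_mul_fromRows, Matrix.mul_one]

theorem Matrix.map_ofReal_fromCols_sub_fromCols_mul_fromRows_one {m n k : Type*} [Fintype n]
    [Fintype k] [DecidableEq n] (A Ahat : Matrix m n ℝ) (B Bhat : Matrix m k ℝ)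
    (K : Matrix k n ℝ) :
    (fromCols A B - fromCols Ahat Bhat).map Complex.ofReal *
        (fromRows (1 : Matrix n n ℝ) K).map Complex.ofReal =
      ((A - Ahat) + (B - Bhat) * K).map Complex.ofReal := by
  rw [← fromCols_sub_fromCols_mul_fromRows_one]
  exact (Matrix.map_mul (f := Complex.ofRealHom)).symm

theorem Matrix.smul_one_sub_map_ofReal_add_mul {n k : Type*} [Fintype n] [Fintype k]
    [DecidableEq n] (A Ahat : Matrix n n ℝ) (B Bhat : Matrix n k ℝ) (K : Matrix k n ℝ) (z : ℂ) :
    z • 1 - (Ahat + Bhat * K).map Complex.ofReal =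
      (z • 1 - (A + B * K).map Complex.ofReal) +
        ((A - Ahat) + (B - Bhat) * K).map Complex.ofReal := by
  have hhat : Ahat + Bhat * K = (A + B * K) - ((A - Ahat) + (B - Bhat) * K) := by
    rw [Matrix.sub_mul]; abel
  rw [hhat, Matrix.map_sub _ Complex.ofReal_sub]
  abel

/-- Lemma 4.2 of Dean et al.: if `ρ(A+BK) < 1`,
`‖A−Â‖₂ ≤ ε_A`, `‖B−B̂‖₂ ≤ ε_B` and
`ζ = (ε_A + ε_B‖K‖₂)·sup_{|z|=1}‖(zI−A−BK)⁻¹‖₂ ≤ 1/(1+√2)`, then for all `z` on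
the unit circle `‖Δᵀ(I;K)(zI−Â−B̂K)⁻¹‖₂ < 1`, where `Δᵀ = (A B) − (Â B̂)`. -/
theorem dean_sufficient_condition (dx du : ℕ)
    (A Ahat : Matrix (Fin dx) (Fin dx) ℝ) (B Bhat : Matrix (Fin dx) (Fin du) ℝ)
    (K : Matrix (Fin du) (Fin dx) ℝ)
    (hstab : ∀ μ ∈ spectrum ℂ ((A + B * K).map Complex.ofReal), ‖μ‖ < 1)
    (εA εB : ℝ)
    (hA : opNorm (A - Ahat) ≤ εA) (hB : opNorm (B - Bhat) ≤ εB)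
    (ζ : ℝ)
    (hζ : ζ = (εA + εB * opNorm K) *
      ⨆ z : {z : ℂ // ‖z‖ = 1}, opNormC
        ((z.1 • (1 : Matrix (Fin dx) (Fin dx) ℂ) - (A + B * K).map Complex.ofReal)⁻¹))
    (hζsmall : ζ ≤ 1 / (1 + Real.sqrt 2)) :
    ∀ z : ℂ, ‖z‖ = 1 →
      opNormC (((Matrix.fromCols A B - Matrix.fromCols Ahat Bhat).map Complex.ofReal) *
        ((Matrix.fromRows (1 : Matrix (Fin dx) (Fin dx) ℝ) K).map Complex.ofReal) *
        (z • (1 : Matrix (Fin dx) (Fin dx) ℂ) -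
          (Ahat + Bhat * K).map Complex.ofReal)⁻¹) < 1 := by
  intro z hz
  rw [map_ofReal_fromCols_sub_fromCols_mul_fromRows_one, smul_one_sub_map_ofReal_add_mul A]
  set M := (A + B * K).map Complex.ofReal
  set D := ((A - Ahat) + (B - Bhat) * K).map Complex.ofReal
  have hM : ∀ w : ℂ, ‖w‖ = 1 → w ∉ spectrum ℂ M := fun w hw hmem ↦ (hstab w hmem).ne hw
  obtain ⟨u, hu⟩ : IsUnit (z • 1 - M) := by
    rw [← Algebra.algebraMap_eq_smul_one]; exact spectrum.notMem_iff.mp (hM z hz)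
  have hb : ‖(↑u⁻¹ : Matrix (Fin dx) (Fin dx) ℂ)‖ * ‖D‖ ≤ ζ := by
    have hR := M.opNormC_inv_le_iSup_sphere hM hz
    rw [← hu, ← coe_units_inv, opNormC_eq_norm] at hR
    have hD : ‖D‖ ≤ εA + εB * opNorm K :=
      (opNormC_map_ofReal_le _).trans (opNorm_add_mul_le hA hB)
    rw [hζ, mul_comm (εA + _)]
    exact mul_le_mul hR hD (norm_nonneg _) ((norm_nonneg _).trans hR)
  have hζhalf : ζ < 1 / 2 := hζsmall.trans_lt <| by
    rw [div_lt_div_iff₀ (by positivity) two_pos]; linarith [Real.one_lt_sqrt_two]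
  have : CompleteSpace (Matrix (Fin dx) (Fin dx) ℂ) := FiniteDimensional.complete ℂ _
  obtain ⟨x, hx⟩ := isUnit_add_of_norm_inv_mul_norm_lt_one u (hb.trans_lt (by linarith))
  rw [← hu, ← hx, ← coe_units_inv, opNormC_eq_norm]
  calc ‖D * ↑x⁻¹‖ ≤ ζ / (1 - ζ) := norm_mul_inv_le_of_eq_add u x hx hb (by linarith)
    _ < 1 := by rw [div_lt_one (by linarith)]; linarith
end

section
/- (MinMax spectral-norm SDP, sufficiency) Let Â, B̂, K, D ≻ 0, t ≥ 0, λ ≥ 0 be such that the block matrix [[tI, (Â + B̂K)^⊤, (I;K)^⊤],[Â + B̂K, (t−λ)I, 0],[(I;K), 0, λD]] ⪰ 0. Then for every Δ with Δ^⊤ D Δ ⪯ I, writing (A B) = (Â B̂) + Δ^⊤, one has ‖A + BK‖₂ ≤ t. -/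
open Matrix

private lemma dot_self_nonneg {n : Type*} [Fintype n] (v : n → ℝ) : 0 ≤ v ⬝ᵥ v :=
  Finset.sum_nonneg fun i _ => mul_self_nonneg (v i)

private lemma dot1 {p q : Type*} [Fintype p] [Fintype q]
    (A : Matrix p q ℝ) (u : p → ℝ) (w : q → ℝ) :
    u ⬝ᵥ (A *ᵥ w) = (Aᵀ *ᵥ u) ⬝ᵥ w := by
  rw [Matrix.dotProduct_mulVec, Matrix.mulVec_transpose]

private lemma dot2 {p q : Type*} [Fintype p] [Fintype q]
    (A : Matrix p q ℝ) (u : q → ℝ) (w : p → ℝ) :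
    (A *ᵥ u) ⬝ᵥ w = u ⬝ᵥ (Aᵀ *ᵥ w) := by
  rw [dotProduct_comm, dot1, dotProduct_comm]

private lemma dot3 {p q : Type*} [Fintype p] [Fintype q]
    (A : Matrix p q ℝ) (u : q → ℝ) (w : p → ℝ) :
    u ⬝ᵥ (Aᵀ *ᵥ w) = w ⬝ᵥ (A *ᵥ u) := by
  rw [dot1, Matrix.transpose_transpose, dotProduct_comm]

/-- MinMax spectral-norm SDP, sufficiency: if the block LMI
`[[tI, (Â+B̂K)ᵀ, (I;K)ᵀ],[Â+B̂K, (t−λ)I, 0],[(I;K), 0, λD]] ⪰ 0` holds, then for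
every `Δ` with `ΔᵀDΔ ⪯ I`, writing `(A B) = (Â B̂) + Δᵀ`, one has
`‖A + BK‖₂ = ‖(Â+B̂K) + Δᵀ(I;K)‖₂ ≤ t`. -/
theorem minmax_sdp_sufficiency (dx du : ℕ)
    (Ahat : Matrix (Fin dx) (Fin dx) ℝ) (Bhat : Matrix (Fin dx) (Fin du) ℝ)
    (K : Matrix (Fin du) (Fin dx) ℝ)
    (D : Matrix (Fin dx ⊕ Fin du) (Fin dx ⊕ Fin du) ℝ) (hD : D.PosDef)
    (t lam : ℝ) (ht : 0 ≤ t) (hlam : 0 ≤ lam)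
    (hLMI : (Matrix.fromBlocks
      (t • (1 : Matrix (Fin dx) (Fin dx) ℝ))
      (Matrix.fromCols (Ahat + Bhat * K)ᵀ
        (Matrix.fromRows (1 : Matrix (Fin dx) (Fin dx) ℝ) K)ᵀ)
      (Matrix.fromRows (Ahat + Bhat * K)
        (Matrix.fromRows (1 : Matrix (Fin dx) (Fin dx) ℝ) K))
      (Matrix.fromBlocks ((t - lam) • (1 : Matrix (Fin dx) (Fin dx) ℝ)) 0 0
        (lam • D))).PosSemidef) :
    ∀ Δ : Matrix (Fin dx ⊕ Fin du) (Fin dx) ℝ,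
      ((1 : Matrix (Fin dx) (Fin dx) ℝ) - Δᵀ * D * Δ).PosSemidef →
      opNorm ((Ahat + Bhat * K) +
        Δᵀ * Matrix.fromRows (1 : Matrix (Fin dx) (Fin dx) ℝ) K) ≤ t := by
  intro Δ hΔ
  set M := Ahat + Bhat * K with hMdef
  set C := Matrix.fromRows (1 : Matrix (Fin dx) (Fin dx) ℝ) K with hCdef
  set N := M + Δᵀ * C with hNdef
  -- Key quadratic inequality
  have key : ∀ x y : Fin dx → ℝ,
      0 ≤ t * (x ⬝ᵥ x) + 2 * (y ⬝ᵥ (N *ᵥ x)) + t * (y ⬝ᵥ y) := by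
    intro x y
    have h1 := hLMI.dotProduct_mulVec_nonneg (Sum.elim x (Sum.elim y (Δ *ᵥ y)))
    have h2 := hΔ.dotProduct_mulVec_nonneg y
    simp only [star_trivial, Matrix.sub_mulVec, Matrix.one_mulVec,
      dotProduct_sub, sub_nonneg] at h2
    simp only [star_trivial, Matrix.fromBlocks_mulVec,
      Matrix.fromCols_mulVec_sumElim, Matrix.fromRows_mulVec,
      sumElim_dotProduct_sumElim, dotProduct_add,
      add_dotProduct, Matrix.smul_mulVec, Matrix.one_mulVec,
      Matrix.zero_mulVec, add_zero, zero_add, dotProduct_smul,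
      smul_eq_mul, Sum.elim_comp_inl, Sum.elim_comp_inr] at h1
    have e1 : x ⬝ᵥ (Mᵀ *ᵥ y) = y ⬝ᵥ (M *ᵥ x) := dot3 M x y
    have e2 : x ⬝ᵥ (Cᵀ *ᵥ (Δ *ᵥ y)) = (Δ *ᵥ y) ⬝ᵥ (C *ᵥ x) := dot3 C x (Δ *ᵥ y)
    have e3 : (Δ *ᵥ y) ⬝ᵥ (C *ᵥ x) = y ⬝ᵥ ((Δᵀ * C) *ᵥ x) := by
      rw [dot2, Matrix.mulVec_mulVec]
    have e4 : (Δ *ᵥ y) ⬝ᵥ (D *ᵥ (Δ *ᵥ y)) = y ⬝ᵥ ((Δᵀ * D * Δ) *ᵥ y) := by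
      rw [dot2, Matrix.mulVec_mulVec, Matrix.mulVec_mulVec, Matrix.mul_assoc]
    have eN : y ⬝ᵥ (N *ᵥ x) = y ⬝ᵥ (M *ᵥ x) + y ⬝ᵥ ((Δᵀ * C) *ᵥ x) := by
      rw [hNdef, Matrix.add_mulVec, dotProduct_add]
    rw [e1, e2, e3, e4] at h1
    rw [eN]
    nlinarith [mul_le_mul_of_nonneg_left h2 hlam]
  -- consequence: ‖N x‖² ≤ t² ‖x‖²
  have main : ∀ x : Fin dx → ℝ, (N *ᵥ x) ⬝ᵥ (N *ᵥ x) ≤ t ^ 2 * (x ⬝ᵥ x) := by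
    intro x
    set a := (N *ᵥ x) ⬝ᵥ (N *ᵥ x) with hadef
    set b := x ⬝ᵥ x with hbdef
    have ha : 0 ≤ a := dot_self_nonneg _
    have hb : 0 ≤ b := dot_self_nonneg x
    have key2 : ∀ s : ℝ, 0 ≤ t * b - 2 * s * a + t * s ^ 2 * a := by
      intro s
      have hkk := key x (-(s • (N *ᵥ x)))
      simp only [neg_dotProduct, dotProduct_neg, neg_neg,
        smul_dotProduct, dotProduct_smul, smul_eq_mul] at hkk
      nlinarith [hkk]
    rcases eq_or_lt_of_le ht with h0 | hpos
    · have := key2 1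
      nlinarith [key2 1, ha, hb, sq_nonneg t]
    · have hti : t * t⁻¹ = 1 := mul_inv_cancel₀ hpos.ne'
      have e : t * t⁻¹ ^ 2 * a = t⁻¹ * a := by
        field_simp
      have h' : t⁻¹ * a ≤ t * b := by
        have hk := key2 t⁻¹
        linarith [hk, e]
      have h'' : a = t * (t⁻¹ * a) := by
        rw [← mul_assoc, hti, one_mul]
      calc a = t * (t⁻¹ * a) := h''
        _ ≤ t * (t * b) := mul_le_mul_of_nonneg_left h' ht
        _ = t ^ 2 * b := by ring
  -- translate to operator norm
  unfold opNorm
  apply ContinuousLinearMap.opNorm_le_bound _ ht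
  intro v
  rw [LinearMap.coe_toContinuousLinearMap']
  have hsq : ‖Matrix.toEuclideanLin N v‖ ^ 2 ≤ (t * ‖v‖) ^ 2 := by
    have h1 : ‖Matrix.toEuclideanLin N v‖ ^ 2
        = (N *ᵥ (WithLp.equiv 2 _ v)) ⬝ᵥ (N *ᵥ (WithLp.equiv 2 _ v)) := by
      rw [← real_inner_self_eq_norm_sq, EuclideanSpace.inner_eq_star_dotProduct]
      simp [Matrix.ofLp_toEuclideanLin_apply]
    have h2 : ‖v‖ ^ 2 = (WithLp.equiv 2 _ v) ⬝ᵥ (WithLp.equiv 2 _ v) := by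
      rw [← real_inner_self_eq_norm_sq, EuclideanSpace.inner_eq_star_dotProduct]
      simp
    rw [h1, mul_pow, h2]
    exact main _
  have := Real.sqrt_le_sqrt hsq
  rwa [Real.sqrt_sq (norm_nonneg _), Real.sqrt_sq (by positivity)] at this
end
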